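/- arXiv:2409.17090 — 2 statements merged into one kernel-verified Lean document; each statement's English description precedes it below -/
import Mathlib

section
/- For a single coordinate: for scalars u ∈ ℝ, s > 0, a > 0, the function g(v) = (1/(2s))(v − u)² + a·1[v ≠ 0] attains its minimum over ℝ at v = 0 if |u| ≤ √(2sa), and at v = u if |u| ≥ √(2sa); moreover min g = min{u²/(2s), a}. -/
/-!
Off zero the penalty is the constant `a`, so the best nonzero choice is `v = u` with value `a`
(or, for `u = 0`, an infimum `a` that is not attained), while `v = 0` costs `u² / (2s)`.
Hence the minimum is `min (u² / (2s)) a`, and comparing the two costs is the same as comparing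
`|u|` with the threshold `√(2sa)`.
-/

namespace HardThreshold

noncomputable def objective (s a u v : ℝ) : ℝ :=
  1 / (2 * s) * (v - u) ^ 2 + if v ≠ 0 then a else 0

variable {s a u : ℝ}

theorem objective_zero : objective s a u 0 = u ^ 2 / (2 * s) := by
  simp only [objective, ne_eq, not_true_eq_false, if_false, add_zero, zero_sub, neg_sq]
  ring

theorem objective_self (hu : u ≠ 0) : objective s a u u = a := by
  simp [objective, hu]

theorem le_objective_of_ne_zero (hs : 0 ≤ s) {v : ℝ} (hv : v ≠ 0) : a ≤ objective s a u v := by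
  have : 0 ≤ 1 / (2 * s) * (v - u) ^ 2 := by positivity
  simp only [objective, ne_eq, hv, not_false_eq_true, if_true]
  linarith

theorem min_le_objective (hs : 0 ≤ s) (v : ℝ) : min (u ^ 2 / (2 * s)) a ≤ objective s a u v := by
  rcases eq_or_ne v 0 with rfl | hv
  · exact objective_zero.symm ▸ min_le_left _ _
  · exact (min_le_right _ _).trans (le_objective_of_ne_zero hs hv)

theorem objective_zero_eq_min (h : u ^ 2 / (2 * s) ≤ a) :
    objective s a u 0 = min (u ^ 2 / (2 * s)) a := by
  rw [objective_zero, min_eq_left h]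

theorem objective_self_eq_min (ha : 0 ≤ a) (h : a ≤ u ^ 2 / (2 * s)) :
    objective s a u u = min (u ^ 2 / (2 * s)) a := by
  rcases eq_or_ne u 0 with rfl | hu
  · -- here `a` is squeezed to `0`, the value at `v = 0`
    have h0 : (0 : ℝ) ^ 2 / (2 * s) = 0 := by simp
    rw [objective_zero, h0, min_eq_left (h0 ▸ ha)]
  · rw [objective_self hu, min_eq_right h]

theorem isLeast_range_objective (hs : 0 ≤ s) (ha : 0 ≤ a) :
    IsLeast (Set.range (objective s a u)) (min (u ^ 2 / (2 * s)) a) := by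
  refine ⟨?_, Set.forall_mem_range.2 (min_le_objective hs)⟩
  rcases le_total (u ^ 2 / (2 * s)) a with h | h
  · exact ⟨0, objective_zero_eq_min h⟩
  · exact ⟨u, objective_self_eq_min ha h⟩

theorem sq_div_le_iff_abs_le_sqrt (hs : 0 < s) (ha : 0 ≤ a) :
    u ^ 2 / (2 * s) ≤ a ↔ |u| ≤ √(2 * s * a) := by
  rw [← Real.sqrt_sq_eq_abs, Real.sqrt_le_sqrt_iff (by positivity), div_le_iff₀ (by positivity),
    mul_comm a]

theorem le_sq_div_iff_sqrt_le_abs (hs : 0 < s) :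
    a ≤ u ^ 2 / (2 * s) ↔ √(2 * s * a) ≤ |u| := by
  rw [← Real.sqrt_sq_eq_abs, Real.sqrt_le_sqrt_iff (sq_nonneg u), le_div_iff₀ (by positivity),
    mul_comm a]

end HardThreshold

open HardThreshold

theorem scalar_hard_threshold
    (u s a : ℝ) (hs : 0 < s) (ha : 0 < a) :
    (let g : ℝ → ℝ := fun v => (1 / (2 * s)) * (v - u) ^ 2 + (if v ≠ 0 then a else 0);
      (|u| ≤ Real.sqrt (2 * s * a) → ∀ v : ℝ, g 0 ≤ g v) ∧
      (Real.sqrt (2 * s * a) ≤ |u| → ∀ v : ℝ, g u ≤ g v) ∧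
      IsLeast (Set.range g) (min (u ^ 2 / (2 * s)) a)) := by
  show (|u| ≤ √(2 * s * a) → ∀ v, objective s a u 0 ≤ objective s a u v) ∧
    (√(2 * s * a) ≤ |u| → ∀ v, objective s a u u ≤ objective s a u v) ∧
    IsLeast (Set.range (objective s a u)) (min (u ^ 2 / (2 * s)) a)
  refine ⟨fun h v => ?_, fun h v => ?_, isLeast_range_objective hs.le ha.le⟩
  · rw [objective_zero_eq_min ((sq_div_le_iff_abs_le_sqrt hs ha.le).2 h)]
    exact min_le_objective hs.le v
  · rw [objective_self_eq_min ha.le ((le_sq_div_iff_sqrt_le_abs hs).2 h)]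
    exact min_le_objective hs.le v
end

section
/- Support shrinkage under small step size: let f : ℝ^n → ℝ be differentiable with ‖∇f(m)‖ ≤ G, let τ = γ min_{t ∈ C} c_t where c_t > 0 for t ∈ C, and suppose the step size satisfies s ≤ 2τ/G². If m ∈ ℝ^n satisfies m_t = 0 for some t ∈ C, then the hard-thresholded gradient step z = T_{s,γ,c}(m − s∇f(m)) also satisfies z_t = 0. Consequently supp(z) ∩ C ⊆ supp(m) ∩ C. -/
open Finset

/-- The junk value `τ / 0 = 0` is what makes this hold also for `G = 0`: then `s ≤ 0`. -/
lemma mul_sq_le_of_le_div_sq {s G τ : ℝ} (hs : 0 < s) (h : s ≤ τ / G ^ 2) : s * G ^ 2 ≤ τ := by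
  rcases eq_or_ne G 0 with rfl | hG
  · rw [zero_pow two_ne_zero, div_zero] at h
    linarith
  · exact (le_div_iff₀ (by positivity)).mp h

lemma mul_abs_le_sqrt_of_mul_sq_le {s x G κ : ℝ} (hs : 0 < s) (hx : |x| ≤ G)
    (hsG : s * G ^ 2 ≤ 2 * κ) : s * |x| ≤ √(2 * s * κ) := by
  apply Real.le_sqrt_of_sq_le
  have hx2 : x ^ 2 ≤ G ^ 2 := sq_le_sq' (abs_le.mp hx).1 (abs_le.mp hx).2
  calc (s * |x|) ^ 2 = s * (s * x ^ 2) := by rw [mul_pow, sq_abs]; ring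
    _ ≤ s * (s * G ^ 2) := by gcongr
    _ ≤ s * (2 * κ) := by gcongr
    _ = 2 * s * κ := by ring

theorem support_shrinkage_general
    {n : ℕ} (γ s G : ℝ) (hγ : 0 < γ) (hs : 0 < s)
    (C : Finset (Fin n)) (hC : C.Nonempty) (c : Fin n → ℝ)
    (g : EuclideanSpace ℝ (Fin n) → EuclideanSpace ℝ (Fin n))
    (m : EuclideanSpace ℝ (Fin n))
    (hGbound : ‖g m‖ ≤ G)
    (τ : ℝ) (hτ : τ = γ * C.inf' hC c)
    (hstep : s ≤ 2 * τ / G ^ 2)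
    (z : EuclideanSpace ℝ (Fin n))
    (hz : ∀ t, z t =
      if t ∈ C ∧ |m t - s * g m t| ≤ Real.sqrt (2 * s * γ * c t) then 0
      else m t - s * g m t) :
    (∀ t ∈ C, m t = 0 → z t = 0) ∧
    Function.support (fun t => z t) ∩ ↑C ⊆ Function.support (fun t => m t) ∩ ↑C := by
  have hzero : ∀ t ∈ C, m t = 0 → z t = 0 := by
    intro t ht hmt
    have hgt : |g m t| ≤ G := (PiLp.norm_apply_le (g m) t).trans hGbound
    have hτt : τ ≤ γ * c t := hτ ▸ mul_le_mul_of_nonneg_left (inf'_le c ht) hγ.le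
    have hsG : s * G ^ 2 ≤ 2 * (γ * c t) := by
      linarith [mul_sq_le_of_le_div_sq hs hstep]
    have hsmall : |m t - s * g m t| ≤ √(2 * s * γ * c t) := by
      rw [hmt, zero_sub, abs_neg, abs_mul, abs_of_pos hs, mul_assoc (2 * s)]
      exact mul_abs_le_sqrt_of_mul_sq_le hs hgt hsG
    rw [hz t, if_pos ⟨ht, hsmall⟩]
  refine ⟨hzero, ?_⟩
  rintro t ⟨hzt, htC⟩
  exact ⟨fun hmt => hzt (hzero t htC hmt), htC⟩

theorem support_shrinkage
    {n : ℕ} (γ s G : ℝ) (hγ : 0 < γ) (hs : 0 < s) (hG : 0 ≤ G)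
    (C : Finset (Fin n)) (hC : C.Nonempty) (c : Fin n → ℝ) (hc : ∀ t ∈ C, 0 < c t)
    (f : EuclideanSpace ℝ (Fin n) → ℝ) (g : EuclideanSpace ℝ (Fin n) → EuclideanSpace ℝ (Fin n))
    (m : EuclideanSpace ℝ (Fin n))
    (hgrad : HasGradientAt f (g m) m)
    (hGbound : ‖g m‖ ≤ G)
    (τ : ℝ) (hτ : τ = γ * C.inf' hC c)
    (hstep : s ≤ 2 * τ / G ^ 2)
    (z : EuclideanSpace ℝ (Fin n))
    (hz : ∀ t, z t =
      if t ∈ C ∧ |m t - s * g m t| ≤ Real.sqrt (2 * s * γ * c t) then 0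
      else m t - s * g m t) :
    (∀ t ∈ C, m t = 0 → z t = 0) ∧
    Function.support (fun t => z t) ∩ ↑C ⊆ Function.support (fun t => m t) ∩ ↑C :=
  support_shrinkage_general γ s G hγ hs C hC c g m hGbound τ hτ hstep z hz
end
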